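/- arXiv:2312.03887 — 9 statements merged into one kernel-verified Lean document; each statement's English description precedes it below -/
import Mathlib

section
/- Let X = F[ℓ,m,p] be a rotational word with 2 ≤ ℓ ≤ p-2, and d the multiplicative inverse of m modulo p. For j ∈ {0,...,p-1}, let Y be the word obtained from X by flipping the single symbol at index (j·d mod p). If j = ℓ-1 then Y equals F[ℓ-1,m,p], and if j = 0 then the shift σ^d(Y) equals F[ℓ-1,m,p]. -/
/-- Words are maps `ZMod p → Bool`, with `true` representing `L` and `false`
representing `R`.  `Fword ℓ m p` is the rotational word `F[ℓ,m,p]`. -/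
def Fword (ℓ m p : ℕ) [NeZero p] : ZMod p → Bool :=
  fun i => decide ((i * (m : ZMod p)).val < ℓ)

/-- Flip the symbol of the word `X` at the single index `k`. -/
def flipAt {p : ℕ} (X : ZMod p → Bool) (k : ZMod p) : ZMod p → Bool :=
  fun i => if i = k then !(X i) else X i

/-- The `k`-fold cyclic shift: `σ^k(X)_i = X_{i+k}`. -/
def shift {p : ℕ} (X : ZMod p → Bool) (k : ℕ) : ZMod p → Bool :=
  fun i => X (i + (k : ZMod p))

/-- If `X = F[ℓ,m,p]` with `2 ≤ ℓ ≤ p-2` and `Y` is obtained from `X` by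
flipping the symbol at index `j·d mod p`, then: if `j = ℓ-1` then
`Y = F[ℓ-1,m,p]`, and if `j = 0` then `σ^d(Y) = F[ℓ-1,m,p]`. -/
theorem flip_is_shift_of_rotational (ℓ m p : ℕ) [NeZero p]
    (hℓ2 : 2 ≤ ℓ) (hℓp : ℓ ≤ p - 2) (hm0 : 0 < m) (hmp : m < p)
    (hcop : Nat.gcd m p = 1)
    (d : ℕ) (hd1 : 1 ≤ d) (hdp : d ≤ p - 1) (hd : m * d % p = 1)
    (j : ℕ) (hj : j < p) :
    (j = ℓ - 1 → flipAt (Fword ℓ m p) ((j * d : ℕ) : ZMod p) = Fword (ℓ - 1) m p) ∧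
    (j = 0 → shift (flipAt (Fword ℓ m p) ((j * d : ℕ) : ZMod p)) d = Fword (ℓ - 1) m p) := by
  have hp4 : 4 ≤ p := by omega
  have hmd : (m : ZMod p) * (d : ZMod p) = 1 := by
    have : ((m * d % p : ℕ) : ZMod p) = ((1 : ℕ) : ZMod p) := by rw [hd]
    rwa [ZMod.natCast_mod, Nat.cast_mul, Nat.cast_one] at this
  have hdm : (d : ZMod p) * (m : ZMod p) = 1 := by rw [mul_comm]; exact hmd
  constructor
  · rintro rfl
    funext i
    simp only [flipAt, Fword]
    have hk : ((((ℓ - 1) * d : ℕ) : ZMod p) * m) = ((ℓ - 1 : ℕ) : ZMod p) := by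
      push_cast
      rw [mul_assoc, hdm, mul_one]
    have hval : (((ℓ - 1 : ℕ) : ZMod p)).val = ℓ - 1 := ZMod.val_natCast_of_lt (by omega)
    by_cases hi : i = (((ℓ - 1) * d : ℕ) : ZMod p)
    · subst hi
      rw [if_pos rfl, hk, hval]
      have h1 : ℓ - 1 < ℓ := by omega
      have h2 : ¬ (ℓ - 1 < ℓ - 1) := lt_irrefl _
      simp [h1, h2]
    · rw [if_neg hi]
      have hne : (i * m).val ≠ ℓ - 1 := by
        intro h
        apply hi
        have : i * m = (((ℓ - 1) * d : ℕ) : ZMod p) * m := by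
          rw [hk, ← h, ZMod.natCast_val, ZMod.cast_id]
        calc i = i * m * d := by rw [mul_assoc, hmd, mul_one]
          _ = (((ℓ - 1) * d : ℕ) : ZMod p) * m * d := by rw [this]
          _ = (((ℓ - 1) * d : ℕ) : ZMod p) := by rw [mul_assoc, hmd, mul_one]
      simp only [decide_eq_decide]
      omega
  · rintro rfl
    funext i
    simp only [shift, flipAt, Fword, Nat.zero_mul, Nat.cast_zero]
    have hadd : (i + (d : ZMod p)) * m = i * m + 1 := by
      rw [add_mul, hdm]
    have hvlt : (i * m).val < p := ZMod.val_lt _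
    have hneg : ((p - 1 : ℕ) : ZMod p) = -1 := by
      have hp : ((p : ℕ) : ZMod p) = 0 := ZMod.natCast_self p
      push_cast [Nat.cast_sub (by omega : 1 ≤ p)]
      rw [hp]; ring
    have hvneg : (-1 : ZMod p).val = p - 1 := by
      rw [← hneg, ZMod.val_natCast_of_lt (by omega)]
    by_cases h0 : i + (d : ZMod p) = 0
    · rw [if_pos h0]
      have him : i * m = -1 := by
        have : (i + (d : ZMod p)) * m = 0 := by rw [h0, zero_mul]
        rw [hadd] at this
        linear_combination this
      have hv : (i * m).val = p - 1 := by rw [him, hvneg]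
      have h1 : ((i + (d : ZMod p)) * m).val = 0 := by
        rw [h0, zero_mul, ZMod.val_zero]
      have h2 : ¬ ((i * m).val < ℓ - 1) := by omega
      have h3 : 0 < ℓ := by omega
      simp [h1, h2, h3]
    · rw [if_neg h0, hadd]
      have hne : (i * m).val ≠ p - 1 := by
        intro h
        apply h0
        have him : i * m = -1 := by
          have : i * m = (((p - 1 : ℕ)) : ZMod p) := by
            rw [← h, ZMod.natCast_val, ZMod.cast_id]
          rw [this, hneg]
        calc i + (d : ZMod p) = (i * m + 1) * d := by
              rw [add_mul, one_mul, mul_assoc, hmd, mul_one]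
          _ = 0 := by rw [him]; ring
      have hone : (1 : ZMod p).val = 1 := by
        rw [← Nat.cast_one, ZMod.val_natCast_of_lt (by omega)]
      have hv1 : (i * m + 1).val = (i * m).val + 1 := by
        rw [ZMod.val_add, hone, Nat.mod_eq_of_lt (by omega)]
      rw [hv1]
      simp only [decide_eq_decide]
      omega
end

section
/- Let X = F[ℓ,m,p] be a rotational word with 2 ≤ ℓ ≤ p-2 and d the multiplicative inverse of m modulo p. If j ∈ {1,...,ℓ-2} (so that 0 < j < ℓ-1), then the word Y obtained from X by flipping the symbol at index (j·d mod p) satisfies Y_{((j-1)d mod p)} = L, Y_{(j·d mod p)} = R, and Y_{((j+1)d mod p)} = L; consequently Y is not a shift of F[ℓ-1,m,p]. -/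
/-- If `X = F[ℓ,m,p]` with `2 ≤ ℓ ≤ p-2` and `0 < j < ℓ-1`, then flipping the
symbol of `X` at index `j·d mod p` produces a word `Y` with
`Y_{(j-1)d} = L`, `Y_{jd} = R`, `Y_{(j+1)d} = L`, so `Y` is not a shift of
`F[ℓ-1,m,p]`. -/
theorem flip_not_shift_of_rotational (ℓ m p : ℕ) [NeZero p]
    (hℓ2 : 2 ≤ ℓ) (hℓp : ℓ ≤ p - 2) (hm0 : 0 < m) (hmp : m < p)
    (hcop : Nat.gcd m p = 1)
    (d : ℕ) (hd1 : 1 ≤ d) (hdp : d ≤ p - 1) (hd : m * d % p = 1)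
    (j : ℕ) (hj1 : 1 ≤ j) (hj2 : j ≤ ℓ - 2) :
    flipAt (Fword ℓ m p) ((j * d : ℕ) : ZMod p) (((j - 1) * d : ℕ) : ZMod p) = true ∧
    flipAt (Fword ℓ m p) ((j * d : ℕ) : ZMod p) ((j * d : ℕ) : ZMod p) = false ∧
    flipAt (Fword ℓ m p) ((j * d : ℕ) : ZMod p) (((j + 1) * d : ℕ) : ZMod p) = true ∧
    ¬ ∃ k : ℕ, flipAt (Fword ℓ m p) ((j * d : ℕ) : ZMod p) = shift (Fword (ℓ - 1) m p) k := by
  have hp4 : 4 ≤ p := by omega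
  have hdm : (d : ZMod p) * (m : ZMod p) = 1 := by
    have h : ((m * d % p : ℕ) : ZMod p) = ((m * d : ℕ) : ZMod p) := ZMod.natCast_mod _ _
    rw [hd] at h
    push_cast at h
    rw [mul_comm]
    exact h.symm
  have key : ∀ a : ℕ, ((a * d : ℕ) : ZMod p) * (m : ZMod p) = (a : ZMod p) := by
    intro a
    push_cast
    rw [mul_assoc, hdm, mul_one]
  have feval : ∀ (L a : ℕ), a < p →
      Fword L m p ((a * d : ℕ) : ZMod p) = decide (a < L) := by
    intro L a ha
    simp only [Fword, key a, ZMod.val_natCast_of_lt ha]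
  have hne : ∀ a b : ℕ, a < p → b < p → a ≠ b →
      ((a * d : ℕ) : ZMod p) ≠ ((b * d : ℕ) : ZMod p) := by
    intro a b ha hb hab h
    apply hab
    have := congrArg (· * (m : ZMod p)) h
    simp only [key] at this
    have := congrArg ZMod.val this
    rwa [ZMod.val_natCast_of_lt ha, ZMod.val_natCast_of_lt hb] at this
  have hjm1 : j - 1 < p := by omega
  have hjp : j < p := by omega
  have hjp1 : j + 1 < p := by omega
  have e1 : flipAt (Fword ℓ m p) ((j * d : ℕ) : ZMod p) (((j - 1) * d : ℕ) : ZMod p) = true := by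
    rw [flipAt, if_neg (hne _ _ hjm1 hjp (by omega)), feval ℓ _ hjm1]
    simp; omega
  have e2 : flipAt (Fword ℓ m p) ((j * d : ℕ) : ZMod p) ((j * d : ℕ) : ZMod p) = false := by
    rw [flipAt, if_pos rfl, feval ℓ _ hjp]
    simp; omega
  have e3 : flipAt (Fword ℓ m p) ((j * d : ℕ) : ZMod p) (((j + 1) * d : ℕ) : ZMod p) = true := by
    rw [flipAt, if_neg (hne _ _ hjp1 hjp (by omega)), feval ℓ _ hjp1]
    simp; omega
  refine ⟨e1, e2, e3, ?_⟩
  rintro ⟨k, hk⟩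
  have h1 := congrFun hk (((j - 1) * d : ℕ) : ZMod p)
  have h2 := congrFun hk ((j * d : ℕ) : ZMod p)
  have h3 := congrFun hk (((j + 1) * d : ℕ) : ZMod p)
  rw [e1] at h1; rw [e2] at h2; rw [e3] at h3
  set e : ZMod p := (k : ZMod p) * (m : ZMod p) with he
  set z : ZMod p := ((j - 1 : ℕ) : ZMod p) + e with hz
  have arg : ∀ a : ℕ, (((a * d : ℕ) : ZMod p) + (k : ZMod p)) * (m : ZMod p)
      = (a : ZMod p) + e := by
    intro a
    rw [add_mul, key]
  have c1 : shift (Fword (ℓ - 1) m p) k (((j - 1) * d : ℕ) : ZMod p)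
      = decide (z.val < ℓ - 1) := by
    simp only [shift, Fword, arg, hz]
  have hj' : ((j : ℕ) : ZMod p) = ((j - 1 : ℕ) : ZMod p) + 1 := by
    have : j = (j - 1) + 1 := by omega
    rw [this]; push_cast; ring
  have c2 : shift (Fword (ℓ - 1) m p) k ((j * d : ℕ) : ZMod p)
      = decide ((z + 1).val < ℓ - 1) := by
    simp only [shift, Fword, arg, hj', hz]
    ring_nf
  have hj'' : ((j + 1 : ℕ) : ZMod p) = ((j - 1 : ℕ) : ZMod p) + 2 := by
    have : j + 1 = (j - 1) + 2 := by omega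
    rw [this]; push_cast; ring
  have c3 : shift (Fword (ℓ - 1) m p) k (((j + 1) * d : ℕ) : ZMod p)
      = decide ((z + 2).val < ℓ - 1) := by
    simp only [shift, Fword, arg, hj'', hz]
    ring_nf
  rw [c1] at h1; rw [c2] at h2; rw [c3] at h3
  have hv1 : z.val < ℓ - 1 := by simpa using h1.symm
  have hv2 : ¬ (z + 1).val < ℓ - 1 := by simpa using h2.symm
  have hv3 : (z + 2).val < ℓ - 1 := by simpa using h3.symm
  haveI : Fact (1 < p) := ⟨by omega⟩
  have hone : (1 : ZMod p).val = 1 := ZMod.val_one p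
  have hs1 : (z + 1).val = z.val + 1 := by
    rw [ZMod.val_add_of_lt]; · rw [hone]
    · rw [hone]; omega
  have hs2 : (z + 2).val = z.val + 2 := by
    have : z + 2 = (z + 1) + 1 := by ring
    rw [this, ZMod.val_add_of_lt]
    · rw [hone, hs1]
    · rw [hone, hs1]; omega
  omega
end

section
/- Let X = F[ℓ,m,p] be a rotational word and d the multiplicative inverse of m modulo p. Let X̄⁰ denote the word obtained from X by flipping the symbol at index 0. Then σ^{ℓd}(X̄⁰) equals the word obtained from σ^{(ℓ-1)d}(X) by flipping its symbol at index 0, where σ is the cyclic shift. -/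
lemma core_nat (p ℓ t : ℕ) (hp : 2 ≤ p) (h1 : 1 ≤ ℓ) (h2 : ℓ ≤ p - 1) (ht : t < p) :
    (if (t + ℓ) % p = 0 then !decide ((t + ℓ) % p < ℓ) else decide ((t + ℓ) % p < ℓ))
    = (if t = 0 then !decide ((t + (ℓ - 1)) % p < ℓ) else decide ((t + (ℓ - 1)) % p < ℓ)) := by
  have ha : (t + ℓ) % p = if t + ℓ < p then t + ℓ else t + ℓ - p := by
    split_ifs with h
    · exact Nat.mod_eq_of_lt h
    · rw [Nat.mod_eq_sub_mod (by omega)]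
      exact Nat.mod_eq_of_lt (by omega)
  have hb : (t + (ℓ - 1)) % p = if t + (ℓ - 1) < p then t + (ℓ - 1) else t + (ℓ - 1) - p := by
    split_ifs with h
    · exact Nat.mod_eq_of_lt h
    · rw [Nat.mod_eq_sub_mod (by omega)]
      exact Nat.mod_eq_of_lt (by omega)
  rw [ha, hb]
  clear ha hb
  simp only [← decide_not]
  split_ifs <;> (rw [decide_eq_decide]) <;> omega

/-- For `X = F[ℓ,m,p]`: `σ^{ℓd}(X̄⁰) = (σ^{(ℓ-1)d}(X))̄⁰`, i.e. shifting the
0-flipped word by `ℓd` equals flipping the `(ℓ-1)d`-shifted word at index 0. -/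
theorem shift_flip_identity (ℓ m p : ℕ) [NeZero p]
    (hℓ1 : 1 ≤ ℓ) (hℓp : ℓ ≤ p - 1) (hm0 : 0 < m) (hmp : m < p)
    (hcop : Nat.gcd m p = 1)
    (d : ℕ) (hd1 : 1 ≤ d) (hdp : d ≤ p - 1) (hd : m * d % p = 1) :
    shift (flipAt (Fword ℓ m p) 0) (ℓ * d)
      = flipAt (shift (Fword ℓ m p) ((ℓ - 1) * d)) 0 := by
  have hp2 : 2 ≤ p := by omega
  have hdm : (m : ZMod p) * (d : ZMod p) = 1 := by
    have h1 : ((m * d : ℕ) : ZMod p) = ((m * d % p : ℕ) : ZMod p) := (ZMod.natCast_mod _ _).symm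
    rw [hd] at h1
    push_cast at h1
    exact h1
  have key : ∀ a : ZMod p, a * (d : ZMod p) * (m : ZMod p) = a := by
    intro a
    rw [mul_assoc, mul_comm (d : ZMod p), hdm, mul_one]
  have inv : ∀ a : ZMod p, a * (m : ZMod p) * (d : ZMod p) = a := by
    intro a
    rw [mul_assoc, hdm, mul_one]
  funext i
  set j : ZMod p := i * (m : ZMod p) with hj
  simp only [shift, flipAt, Fword]
  have e1 : (i + ((ℓ * d : ℕ) : ZMod p)) * (m : ZMod p) = j + ((ℓ : ℕ) : ZMod p) := by
    rw [Nat.cast_mul, add_mul, key, hj]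
  have e2 : (i + (((ℓ - 1) * d : ℕ) : ZMod p)) * (m : ZMod p) = j + ((ℓ - 1 : ℕ) : ZMod p) := by
    rw [Nat.cast_mul, add_mul, key, hj]
  have c1 : (i + ((ℓ * d : ℕ) : ZMod p) = 0) ↔ (j + ((ℓ : ℕ) : ZMod p) = 0) := by
    constructor
    · intro h; rw [← e1, h, zero_mul]
    · intro h
      have h0 : (i + ((ℓ * d : ℕ) : ZMod p)) * (m : ZMod p) = 0 := by rw [e1, h]
      calc i + ((ℓ * d : ℕ) : ZMod p)
          = (i + ((ℓ * d : ℕ) : ZMod p)) * (m : ZMod p) * (d : ZMod p) := (inv _).symm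
        _ = 0 := by rw [h0, zero_mul]
  have c2 : (i = 0) ↔ (j = 0) := by
    constructor
    · intro h; rw [hj, h, zero_mul]
    · intro h
      calc i = i * (m : ZMod p) * (d : ZMod p) := (inv i).symm
        _ = 0 := by rw [← hj, h, zero_mul]
  rw [e1, e2]
  have hℓv : ((ℓ : ℕ) : ZMod p).val = ℓ := by
    rw [ZMod.val_natCast]; exact Nat.mod_eq_of_lt (by omega)
  have hℓ1v : ((ℓ - 1 : ℕ) : ZMod p).val = ℓ - 1 := by
    rw [ZMod.val_natCast]; exact Nat.mod_eq_of_lt (by omega)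
  have v1 : (j + ((ℓ : ℕ) : ZMod p)).val = (j.val + ℓ) % p := by
    rw [ZMod.val_add, hℓv]
  have v2 : (j + ((ℓ - 1 : ℕ) : ZMod p)).val = (j.val + (ℓ - 1)) % p := by
    rw [ZMod.val_add, hℓ1v]
  have c1' : (j + ((ℓ : ℕ) : ZMod p) = 0) ↔ ((j.val + ℓ) % p = 0) := by
    rw [← v1, ← ZMod.val_eq_zero]
  have c2' : (j = 0) ↔ (j.val = 0) := (ZMod.val_eq_zero j).symm
  rw [v1, v2]
  simp only [c1, c2, c1', c2']
  exact core_nat p ℓ j.val hp2 hℓ1 hℓp (ZMod.val_lt j)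
end

section
/- Let X be a word of length p over {L,R}, and let A_L, A_R be n×n matrices that differ only in their first columns. Define M_X = A_{X_{p-1}} ⋯ A_{X_1} A_{X_0} and P_X = A_{X_{p-1}} ⋯ A_{X_1} + A_{X_{p-1}} ⋯ A_{X_2} + ⋯ + A_{X_{p-1}} + I. Then P_X (I - A_{X_0}) = I - M_X + Σ_{j=1}^{p-1} A_{X_{p-1}} ⋯ A_{X_{j+1}} (A_{X_j} - A_{X_0}), and consequently the matrices I - M_X and P_X (I - A_{X_0}) differ only in their first columns. -/
open Matrix

/-- Partial product `A_{X_{p-1}} ⋯ A_{X_{j+1}}` (the empty product `I` when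
`j = p-1`).  Here `A true = A_L`, `A false = A_R`. -/
def tailProd {n p : ℕ} (A : Bool → Matrix (Fin n) (Fin n) ℝ) (X : Fin p → Bool) (j : ℕ) :
    Matrix (Fin n) (Fin n) ℝ :=
  (((List.ofFn fun i : Fin p => A (X i)).drop (j + 1)).reverse).prod

/-- `M_X = A_{X_{p-1}} ⋯ A_{X_1} A_{X_0}`. -/
def Mword {n p : ℕ} (A : Bool → Matrix (Fin n) (Fin n) ℝ) (X : Fin p → Bool) :
    Matrix (Fin n) (Fin n) ℝ :=
  ((List.ofFn fun i : Fin p => A (X i)).reverse).prod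

/-- `P_X = A_{X_{p-1}} ⋯ A_{X_1} + A_{X_{p-1}} ⋯ A_{X_2} + ⋯ + A_{X_{p-1}} + I`. -/
def Pword {n p : ℕ} (A : Bool → Matrix (Fin n) (Fin n) ℝ) (X : Fin p → Bool) :
    Matrix (Fin n) (Fin n) ℝ :=
  ∑ j : Fin p, tailProd A X j.val

/-- `P_X (I - A_{X_0}) = I - M_X + Σ_{j=1}^{p-1} A_{X_{p-1}} ⋯ A_{X_{j+1}} (A_{X_j} - A_{X_0})`;
consequently, since `A_L` and `A_R` differ only in their first columns,
`I - M_X` and `P_X (I - A_{X_0})` differ only in their first columns. -/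
theorem Pword_mul_one_sub (n p : ℕ) [NeZero n] [NeZero p]
    (A : Bool → Matrix (Fin n) (Fin n) ℝ)
    (hcol : ∀ i j, j ≠ 0 → A true i j = A false i j)
    (X : Fin p → Bool) :
    Pword A X * (1 - A (X 0)) =
      1 - Mword A X + ∑ j ∈ Finset.Ioi (0 : Fin p), tailProd A X j.val * (A (X j) - A (X 0)) ∧
    ∀ i c, c ≠ 0 → (1 - Mword A X) i c = (Pword A X * (1 - A (X 0))) i c := by
  classical
  set l : List (Matrix (Fin n) (Fin n) ℝ) := List.ofFn fun i : Fin p => A (X i) with hl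
  have hlen : l.length = p := by simp [hl]
  set g : ℕ → Matrix (Fin n) (Fin n) ℝ := fun j => ((l.drop j).reverse).prod with hg
  have step : ∀ j : Fin p, tailProd A X j.val * A (X j) = g j.val := by
    intro j
    have hjl : (j : ℕ) < l.length := by omega
    have hdrop : l.drop j.val = A (X j) :: l.drop (j.val + 1) := by
      rw [List.drop_eq_getElem_cons hjl]
      congr 1
      simp [hl]
    rw [tailProd, ← hl]
    show _ = ((l.drop j.val).reverse).prod
    rw [hdrop]
    simp
  have g0 : g 0 = Mword A X := by simp [g, Mword, hl]
  have gp : g p = 1 := by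
    have : l.drop p = [] := List.drop_eq_nil_of_le (by omega)
    simp [g, this]
  have tele : ∑ j : Fin p, (g (j.val + 1) - g j.val) = 1 - Mword A X := by
    rw [Fin.sum_univ_eq_sum_range (fun j => g (j + 1) - g j) p,
      Finset.sum_range_sub g p, g0, gp]
  have key : Pword A X * (1 - A (X 0)) =
      1 - Mword A X + ∑ j : Fin p, tailProd A X j.val * (A (X j) - A (X 0)) := by
    have h1 : Pword A X * (1 - A (X 0)) =
        ∑ j : Fin p, ((g (j.val + 1) - g j.val) + tailProd A X j.val * (A (X j) - A (X 0))) := by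
      rw [Pword, Finset.sum_mul]
      refine Finset.sum_congr rfl fun j _ => ?_
      have htp : tailProd A X j.val = g (j.val + 1) := rfl
      rw [mul_sub, mul_one, mul_sub, ← step j, htp]
      abel
    rw [h1, Finset.sum_add_distrib, tele]
  have hIoi : (Finset.Ioi (0 : Fin p)) = Finset.univ.erase 0 := by
    ext x
    simp only [Finset.mem_Ioi, Finset.mem_erase, Finset.mem_univ, and_true]
    exact Fin.pos_iff_ne_zero' x
  have hsum0 : ∑ j : Fin p, tailProd A X j.val * (A (X j) - A (X 0)) =
      ∑ j ∈ Finset.Ioi (0 : Fin p), tailProd A X j.val * (A (X j) - A (X 0)) := by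
    rw [hIoi]
    rw [← Finset.add_sum_erase Finset.univ _ (Finset.mem_univ (0 : Fin p))]
    simp
  have key' : Pword A X * (1 - A (X 0)) =
      1 - Mword A X + ∑ j ∈ Finset.Ioi (0 : Fin p),
        tailProd A X j.val * (A (X j) - A (X 0)) := by rw [key, hsum0]
  refine ⟨key', ?_⟩
  intro i c hc
  have hent : ∀ (j : Fin p) (k : Fin n), (A (X j) - A (X 0)) k c = 0 := by
    intro j k
    have hb : ∀ b : Bool, A b k c = A false k c := by
      intro b; cases b
      · rfl
      · exact hcol k c hc
    simp [Matrix.sub_apply, hb (X j), hb (X 0)]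
  have hS : (∑ j ∈ Finset.Ioi (0 : Fin p),
      tailProd A X j.val * (A (X j) - A (X 0))) i c = 0 := by
    rw [Matrix.sum_apply]
    refine Finset.sum_eq_zero fun j _ => ?_
    rw [Matrix.mul_apply]
    refine Finset.sum_eq_zero fun k _ => ?_
    rw [hent j k, mul_zero]
  rw [key', Matrix.add_apply, hS, add_zero]
end

section
/- Let X ∈ {L,R}^p be a word, A_L and A_R be n×n matrices differing only in their first columns, and b ∈ ℝⁿ. Let M_X and P_X be as usual, and suppose det(I - M_X) ≠ 0. Then the first component of the fixed point x^X = (I - M_X)^{-1} P_X b equals det(P_X) · ρᵀ b / det(I - M_X), where ρᵀ is the common first row of adj(I - A_L) and adj(I - A_R). -/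
open Matrix

lemma telescope {n p : ℕ} [NeZero p] (A : Bool → Matrix (Fin n) (Fin n) ℝ)
    (X : Fin p → Bool) :
    1 - Mword A X = ∑ j : Fin p, tailProd A X j.val * (1 - A (X j)) := by
  set L : List (Matrix (Fin n) (Fin n) ℝ) := List.ofFn fun i : Fin p => A (X i) with hL
  have hlen : L.length = p := by simp [hL]
  set F : ℕ → Matrix (Fin n) (Fin n) ℝ := fun j => ((L.drop j).reverse).prod with hF
  have hterm : ∀ j : Fin p, tailProd A X j.val * (1 - A (X j)) = F (j.val + 1) - F j.val := by
    intro j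
    have hj : (j : ℕ) < L.length := by rw [hlen]; exact j.isLt
    have hdrop : L.drop j.val = L[(j:ℕ)] :: L.drop (j.val + 1) := List.drop_eq_getElem_cons hj
    have hget : L[(j:ℕ)] = A (X j) := by simp [hL]
    have hFj : F j.val = F (j.val + 1) * A (X j) := by
      rw [hF]
      simp only [hdrop, List.reverse_cons, List.prod_append, List.prod_cons, List.prod_nil,
        mul_one, hget]
    rw [mul_sub, mul_one, hFj]
    rfl
  rw [Finset.sum_congr rfl fun j _ => hterm j, Fin.sum_univ_eq_sum_range
    (fun j => F (j + 1) - F j) p, Finset.sum_range_sub]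
  have h1 : F p = 1 := by
    have : L.drop p = [] := by rw [← hlen]; exact List.drop_length
    simp [hF, this]
  have h0 : F 0 = Mword A X := by simp [hF, Mword, hL]
  rw [h1, h0]
lemma adj_row_zero_eq {n : ℕ} [NeZero n] (B C : Matrix (Fin n) (Fin n) ℝ)
    (h : ∀ i k, k ≠ 0 → B i k = C i k) : B.adjugate 0 = C.adjugate 0 := by
  funext j
  rw [adjugate_apply, adjugate_apply]
  set U := C.updateRow j (Pi.single 0 1) with hU
  have hB : B.updateRow j (Pi.single 0 1) =
      U.updateCol 0 (fun i => if i = j then 1 else B i 0) := by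
    funext i k
    by_cases hij : i = j
    · by_cases hk : k = 0 <;>
        simp [hU, updateRow_apply, updateCol_apply, hij, hk, Pi.single_apply]
    · by_cases hk : k = 0
      · simp [hU, updateRow_apply, updateCol_apply, hij, hk]
      · simp only [hU, updateRow_apply, updateCol_apply, if_neg hij, if_neg hk]
        exact h i k hk
  have hsplit : (fun i => if i = j then (1:ℝ) else B i 0) =
      (fun i => U i 0) + fun i => if i = j then 0 else B i 0 - C i 0 := by
    funext i
    by_cases hij : i = j <;>
      simp [hU, updateRow_apply, hij, Pi.single_apply]
  rw [hB, hsplit, det_updateCol_add]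
  have h0 : (U.updateCol 0 fun i => if i = j then 0 else B i 0 - C i 0).det = 0 := by
    apply det_eq_zero_of_row_eq_zero j
    intro k
    by_cases hk : k = 0
    · simp [updateCol_apply, hk]
    · simp [hU, updateCol_apply, hk, updateRow_apply, Pi.single_apply, Ne.symm hk]
  rw [h0, add_zero, updateCol_eq_self U 0]

/-- If `det(I - M_X) ≠ 0` then the fixed point `x^X = (I - M_X)⁻¹ P_X b` has
first component `det(P_X) ρᵀ b / det(I - M_X)`, where `ρᵀ` is the common first
row of `adj(I - A_L)` and `adj(I - A_R)`. -/
theorem xW_first_component (n p : ℕ) [NeZero n] [NeZero p]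
    (A : Bool → Matrix (Fin n) (Fin n) ℝ) (b : Fin n → ℝ)
    (hcol : ∀ i j, j ≠ 0 → A true i j = A false i j)
    (X : Fin p → Bool)
    (hdet : (1 - Mword A X).det ≠ 0)
    (ρ : Fin n → ℝ) (hρL : ρ = (1 - A true).adjugate 0)
    (hρR : ρ = (1 - A false).adjugate 0) :
    ((1 - Mword A X)⁻¹ *ᵥ (Pword A X *ᵥ b)) 0 =
      (Pword A X).det * (ρ ⬝ᵥ b) / (1 - Mword A X).det := by
  set D := 1 - Mword A X with hD
  set P := Pword A X with hP
  have hA : ∀ (c d : Bool) (i : Fin n) (k : Fin n), k ≠ 0 → A c i k = A d i k := by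
    intro c d i k hk
    cases c <;> cases d <;> simp [hcol i k hk]
  have hcols : ∀ i k, k ≠ 0 → D i k = (P * (1 - A (X 0))) i k := by
    intro i k hk
    rw [hD, telescope A X, hP, Pword, Finset.sum_mul]
    rw [Matrix.sum_apply, Matrix.sum_apply]
    refine Finset.sum_congr rfl fun j _ => ?_
    rw [Matrix.mul_apply, Matrix.mul_apply]
    refine Finset.sum_congr rfl fun m _ => ?_
    congr 1
    simp only [Matrix.sub_apply, Matrix.one_apply]
    rw [hA (X j) (X 0) m k hk]
  have hrow : D.adjugate 0 = fun j => ∑ m, ρ m * P.adjugate m j := by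
    rw [adj_row_zero_eq D (P * (1 - A (X 0))) hcols, adjugate_mul_distrib]
    funext j
    rw [Matrix.mul_apply]
    refine Finset.sum_congr rfl fun m _ => ?_
    have hρ : ρ = (1 - A (X 0)).adjugate 0 := by
      cases hX : X 0
      · exact hρR
      · exact hρL
    rw [hρ]
  rw [Matrix.inv_def, Ring.inverse_eq_inv', Matrix.smul_mulVec]
  have hmain : (D.adjugate *ᵥ (P *ᵥ b)) 0 = P.det * (ρ ⬝ᵥ b) := by
    have h1 : (D.adjugate *ᵥ (P *ᵥ b)) 0 = D.adjugate 0 ⬝ᵥ (P *ᵥ b) := rfl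
    rw [h1, hrow]
    have h2 : (fun j => ∑ m, ρ m * P.adjugate m j) = ρ ᵥ* P.adjugate := by
      funext j; rw [Matrix.vecMul, dotProduct]
    rw [h2, ← dotProduct_mulVec, Matrix.mulVec_mulVec, adjugate_mul,
      Matrix.smul_mulVec, Matrix.one_mulVec, dotProduct_smul]
    simp [mul_comm]
  simp only [Pi.smul_apply, hmain, smul_eq_mul]
  field_simp
end

section
/- The piecewise-linear continuous map f on ℝⁿ defined by f(x) = A_L x + b for x₁ ≤ 0 and f(x) = A_R x + b for x₁ ≥ 0 (with A_L, A_R differing only in their first columns) is a homeomorphism of ℝⁿ if and only if det(A_L) · det(A_R) > 0. -/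
open Matrix

private lemma adj_row_zero {n : ℕ} (AL AR : Matrix (Fin (n + 1)) (Fin (n + 1)) ℝ)
    (hcol : ∀ i j, j ≠ 0 → AL i j = AR i j) (j : Fin (n + 1)) :
    adjugate AL 0 j = adjugate AR 0 j := by
  rw [adjugate_apply, adjugate_apply]
  set M := AL.updateRow j (Pi.single 0 1) with hM
  have h1 : AR.updateRow j (Pi.single 0 1)
      = M.updateCol 0 ((fun i => M i 0) + fun i => if i = j then 0 else AR i 0 - AL i 0) := by
    ext i k
    by_cases hk : k = 0
    · subst hk
      by_cases hi : i = j <;>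
        simp [hM, Matrix.updateCol_apply, Matrix.updateRow_apply, hi]
    · simp [hM, Matrix.updateCol_apply, Matrix.updateRow_apply, hk, hcol i k hk]
  rw [h1, det_updateCol_add, Matrix.updateCol_eq_self]
  have h2 : (M.updateCol 0 fun i => if i = j then 0 else AR i 0 - AL i 0).det = 0 := by
    apply det_eq_zero_of_row_eq_zero j
    intro k
    by_cases hk : k = 0
    · subst hk; simp [Matrix.updateCol_apply]
    · simp [Matrix.updateCol_apply, hk, hM, Matrix.updateRow_apply,
        Pi.single_eq_of_ne hk]
  rw [h2, add_zero]

/-- The continuous piecewise-linear map `f(x) = A_L x + b` for `x₁ ≤ 0`,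
`f(x) = A_R x + b` for `x₁ ≥ 0` (with `A_L, A_R` differing only in their first
columns) is a homeomorphism of `ℝⁿ` if and only if `det(A_L)·det(A_R) > 0`. -/
theorem pwl_homeomorph_iff_det_pos (n : ℕ)
    (AL AR : Matrix (Fin (n + 1)) (Fin (n + 1)) ℝ) (b : Fin (n + 1) → ℝ)
    (hcol : ∀ i j, j ≠ 0 → AL i j = AR i j)
    (f : (Fin (n + 1) → ℝ) → (Fin (n + 1) → ℝ))
    (hf : ∀ x, f x = if x 0 ≤ 0 then AL *ᵥ x + b else AR *ᵥ x + b) :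
    (∃ h : (Fin (n + 1) → ℝ) ≃ₜ (Fin (n + 1) → ℝ), ⇑h = f) ↔ AL.det * AR.det > 0 := by
  classical
  -- the common "first row of the adjugate" linear functional
  set φ : (Fin (n + 1) → ℝ) → ℝ := fun y => (adjugate AL *ᵥ y) 0 with hφ
  have keyL : ∀ x, φ (AL *ᵥ x) = AL.det * x 0 := by
    intro x
    simp only [hφ, mulVec_mulVec, adjugate_mul, smul_mulVec, one_mulVec]
    simp [smul_eq_mul]
  have hrow : ∀ y, φ y = (adjugate AR *ᵥ y) 0 := by
    intro y
    simp only [hφ, Matrix.mulVec, dotProduct]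
    exact Finset.sum_congr rfl fun j _ => by rw [adj_row_zero AL AR hcol j]
  have keyR : ∀ x, φ (AR *ᵥ x) = AR.det * x 0 := by
    intro x
    rw [hrow]
    simp only [mulVec_mulVec, adjugate_mul, smul_mulVec, one_mulVec]
    simp [smul_eq_mul]
  -- agreement on the switching manifold
  have hbd : ∀ x : Fin (n + 1) → ℝ, x 0 = 0 → AL *ᵥ x = AR *ᵥ x := by
    intro x hx
    ext i
    simp only [Matrix.mulVec, dotProduct]
    refine Finset.sum_congr rfl fun j _ => ?_
    by_cases hj : j = 0
    · subst hj; rw [hx]; ring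
    · rw [hcol i j hj]
  have contmv : ∀ (A : Matrix (Fin (n + 1)) (Fin (n + 1)) ℝ),
      Continuous fun x : Fin (n + 1) → ℝ => A *ᵥ x := by
    intro A
    have := (Matrix.mulVecLin A).continuous_of_finiteDimensional
    exact this
  constructor
  · rintro ⟨h, hh⟩
    have hbij : Function.Bijective f := hh ▸ h.bijective
    -- det AL ≠ 0
    have hdL : AL.det ≠ 0 := by
      intro h0
      obtain ⟨v, hv, hAv⟩ := (Matrix.exists_mulVec_eq_zero_iff).mpr h0
      set x : Fin (n + 1) → ℝ := Pi.single 0 (-(1 + |v 0|)) with hx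
      have hx0 : x 0 = -(1 + |v 0|) := by simp [hx]
      have h1 : x 0 ≤ 0 := by rw [hx0]; have := abs_nonneg (v 0); linarith
      have h2 : (x + v) 0 ≤ 0 := by
        have h3 := le_abs_self (v 0)
        simp only [Pi.add_apply, hx0]; linarith
      have heq : f x = f (x + v) := by
        rw [hf, hf, if_pos h1, if_pos h2, Matrix.mulVec_add, hAv, add_zero]
      exact hv (left_eq_add.mp (hbij.injective heq))
    -- det AR ≠ 0
    have hdR : AR.det ≠ 0 := by
      intro h0
      obtain ⟨v, hv, hAv⟩ := (Matrix.exists_mulVec_eq_zero_iff).mpr h0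
      set x : Fin (n + 1) → ℝ := Pi.single 0 (1 + |v 0|) with hx
      have hx0 : x 0 = 1 + |v 0| := by simp [hx]
      have h1 : ¬ x 0 ≤ 0 := by rw [hx0]; have := abs_nonneg (v 0); linarith
      have h2 : ¬ (x + v) 0 ≤ 0 := by
        have := neg_abs_le (v 0)
        simp only [Pi.add_apply, hx0]; push_neg; linarith
      have heq : f x = f (x + v) := by
        rw [hf, hf, if_neg h1, if_neg h2, Matrix.mulVec_add, hAv, add_zero]
      exact hv (left_eq_add.mp (hbij.injective heq))
    -- rule out opposite signs using surjectivity
    rcases (mul_ne_zero hdL hdR).lt_or_gt with hlt | hgt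
    · exfalso
      obtain ⟨x, hxy⟩ := hbij.surjective (b + AL *ᵥ Pi.single 0 1)
      have hkey : φ (f x - b) = AL.det := by
        rw [hxy]
        have : b + AL *ᵥ Pi.single (0 : Fin (n + 1)) (1 : ℝ) - b
            = AL *ᵥ Pi.single 0 1 := by ring_nf
        rw [this, keyL]
        simp
      by_cases hc : x 0 ≤ 0
      · have : f x - b = AL *ᵥ x := by rw [hf, if_pos hc]; ring_nf
        rw [this, keyL] at hkey
        have hx1 : x 0 = 1 := mul_left_cancel₀ hdL (hkey.trans (mul_one _).symm)
        rw [hx1] at hc; linarith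
      · have : f x - b = AR *ᵥ x := by rw [hf, if_neg hc]; ring_nf
        rw [this, keyR] at hkey
        push_neg at hc
        have h2 : AL.det * AR.det = (AR.det * AR.det) * (x 0) := by rw [← hkey]; ring
        have h3 := mul_pos (mul_self_pos.mpr hdR) hc
        linarith
    · exact hgt
  · intro hdet
    have hdL : AL.det ≠ 0 := fun h => by rw [h, zero_mul] at hdet; exact lt_irrefl 0 hdet
    have hdR : AR.det ≠ 0 := fun h => by rw [h, mul_zero] at hdet; exact lt_irrefl 0 hdet
    have hiL : IsUnit AL.det := isUnit_iff_ne_zero.mpr hdL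
    have hiR : IsUnit AR.det := isUnit_iff_ne_zero.mpr hdR
    have hLinv : ∀ x, AL⁻¹ *ᵥ (AL *ᵥ x) = x := fun x => by
      rw [mulVec_mulVec, Matrix.nonsing_inv_mul _ hiL, one_mulVec]
    have hRinv : ∀ x, AR⁻¹ *ᵥ (AR *ᵥ x) = x := fun x => by
      rw [mulVec_mulVec, Matrix.nonsing_inv_mul _ hiR, one_mulVec]
    have hLinv' : ∀ z, AL *ᵥ (AL⁻¹ *ᵥ z) = z := fun z => by
      rw [mulVec_mulVec, Matrix.mul_nonsing_inv _ hiL, one_mulVec]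
    have hRinv' : ∀ z, AR *ᵥ (AR⁻¹ *ᵥ z) = z := fun z => by
      rw [mulVec_mulVec, Matrix.mul_nonsing_inv _ hiR, one_mulVec]
    set g : (Fin (n + 1) → ℝ) → (Fin (n + 1) → ℝ) := fun y =>
      if AL.det * φ (y - b) ≤ 0 then AL⁻¹ *ᵥ (y - b) else AR⁻¹ *ᵥ (y - b) with hg
    have hgf : ∀ x, g (f x) = x := by
      intro x
      by_cases hc : x 0 ≤ 0
      · have hfx : f x - b = AL *ᵥ x := by rw [hf, if_pos hc]; ring_nf
        have hcond : AL.det * φ (AL *ᵥ x) ≤ 0 := by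
          rw [keyL]; nlinarith [sq_nonneg AL.det]
        rw [hg]; simp only [hfx]; rw [if_pos hcond, hLinv]
      · have hfx : f x - b = AR *ᵥ x := by rw [hf, if_neg hc]; ring_nf
        push_neg at hc
        have hcond : ¬ AL.det * φ (AR *ᵥ x) ≤ 0 := by
          rw [keyR]; push_neg; nlinarith
        rw [hg]; simp only [hfx]; rw [if_neg hcond, hRinv]
    have hfg : ∀ y, f (g y) = y := by
      intro y
      by_cases hc : AL.det * φ (y - b) ≤ 0
      · rw [hg]; simp only [if_pos hc]
        set x := AL⁻¹ *ᵥ (y - b) with hx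
        have hax : AL *ᵥ x = y - b := hLinv' _
        have hx0 : AL.det * x 0 = φ (y - b) := by rw [← keyL, hax]
        have h2 : (AL.det * AL.det) * x 0 ≤ 0 := by
          calc (AL.det * AL.det) * x 0 = AL.det * (AL.det * x 0) := by ring
            _ = AL.det * φ (y - b) := by rw [hx0]
            _ ≤ 0 := hc
        have hx0' : x 0 ≤ 0 := by
          by_contra hcon
          push_neg at hcon
          nlinarith [mul_pos (mul_self_pos.mpr hdL) hcon]
        rw [hf, if_pos hx0', hax]; ring_nf
      · rw [hg]; simp only [if_neg hc]
        push_neg at hc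
        set x := AR⁻¹ *ᵥ (y - b) with hx
        have hax : AR *ᵥ x = y - b := hRinv' _
        have hx0 : AR.det * x 0 = φ (y - b) := by rw [← keyR, hax]
        have hRφ : 0 < AR.det * φ (y - b) := by
          nlinarith [mul_pos hdet hc, mul_self_pos.mpr hdL]
        have h2 : 0 < (AR.det * AR.det) * x 0 := by
          calc (0:ℝ) < AR.det * φ (y - b) := hRφ
            _ = AR.det * (AR.det * x 0) := by rw [hx0]
            _ = (AR.det * AR.det) * x 0 := by ring
        have hx0' : ¬ x 0 ≤ 0 := by
          push_neg
          by_contra hcon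
          push_neg at hcon
          nlinarith [mul_self_pos.mpr hdR]
        rw [hf, if_neg hx0', hax]; ring_nf
    have contφ : Continuous φ := (continuous_apply 0).comp (contmv _)
    have contf : Continuous f := by
      have : Continuous fun x : Fin (n + 1) → ℝ =>
          if x 0 ≤ (fun _ => (0 : ℝ)) x then AL *ᵥ x + b else AR *ᵥ x + b := by
        apply Continuous.if_le ((contmv AL).add continuous_const)
          ((contmv AR).add continuous_const) (continuous_apply 0) continuous_const
        intro x hx
        show AL *ᵥ x + b = AR *ᵥ x + b
        rw [hbd x hx]
      convert this using 1
      funext x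
      rw [hf]
    have contg : Continuous g := by
      have : Continuous fun y : Fin (n + 1) → ℝ =>
          if AL.det * φ (y - b) ≤ (fun _ => (0 : ℝ)) y
          then AL⁻¹ *ᵥ (y - b) else AR⁻¹ *ᵥ (y - b) := by
        apply Continuous.if_le
          ((contmv AL⁻¹).comp (continuous_id.sub continuous_const))
          ((contmv AR⁻¹).comp (continuous_id.sub continuous_const))
          (continuous_const.mul (contφ.comp (continuous_id.sub continuous_const)))
          continuous_const
        intro y hy
        have hφ0 : φ (y - b) = 0 := by
          rcases mul_eq_zero.mp hy with h | h
          · exact absurd h hdL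
          · exact h
        set x := AL⁻¹ *ᵥ (y - b) with hx
        have hax : AL *ᵥ x = y - b := hLinv' _
        have hx0 : AL.det * x 0 = 0 := by rw [← keyL, hax, hφ0]
        have hx0' : x 0 = 0 := by
          rcases mul_eq_zero.mp hx0 with h | h
          · exact absurd h hdL
          · exact h
        have h3 : AR *ᵥ x = y - b := by rw [← hbd x hx0', hax]
        show AL⁻¹ *ᵥ (y - b) = AR⁻¹ *ᵥ (y - b)
        calc AL⁻¹ *ᵥ (y - b) = x := by rw [← hax, hLinv]
          _ = AR⁻¹ *ᵥ (y - b) := by rw [← h3, hRinv]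
      exact this
    exact ⟨⟨⟨f, g, hgf, hfg⟩, contf, contg⟩, rfl⟩
end

section
/- Let ξ be a period-p orbit of a degree-1 circle homeomorphism g : S¹ → S¹, let s be the smallest point of ξ in [0,1), and let m be the number of points of ξ in [c,1) where c = g^{-1}(0). Then gcd(m,p) = 1. -/
/-- Let `g` be a degree-1 circle homeomorphism, represented by a lift
`G : ℝ → ℝ` (an increasing homeomorphism with `G(w+1) = G(w)+1`); circle points
are represented by their fractional parts in `[0,1)`.  If `ξ` is a period-`p`
orbit (the points `fract(G^i(s))`, `i < p`, are distinct and `G^p(s) ≡ s`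
mod 1), `c = g⁻¹(0)` (i.e. `c ∈ [0,1)` with `fract(G c) = 0`) and `m` is the
number of points of `ξ` in `[c,1)`, then `gcd(m,p) = 1`. -/
theorem orbit_count_coprime
    (G : ℝ → ℝ) (hmono : StrictMono G) (hsurj : Function.Surjective G)
    (hper : ∀ x : ℝ, G (x + 1) = G x + 1)
    (p : ℕ) (hp : 1 ≤ p)
    (s : ℝ) (hs : s ∈ Set.Ico (0 : ℝ) 1)
    (hsmallest : ∀ i, i < p → s ≤ Int.fract (G^[i] s))
    (hdistinct : ∀ i j, i < p → j < p →
      Int.fract (G^[i] s) = Int.fract (G^[j] s) → i = j)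
    (hperiodic : ∃ k : ℤ, G^[p] s = s + k)
    (c : ℝ) (hc : c ∈ Set.Ico (0 : ℝ) 1) (hgc : Int.fract (G c) = 0)
    (m : ℕ)
    (hm : m = ((Finset.range p).filter (fun i => c ≤ Int.fract (G^[i] s))).card) :
    Nat.gcd m p = 1 := by
  obtain ⟨k, hk⟩ := hperiodic
  -- G commutes with integer translations
  have hGnat : ∀ (x : ℝ) (j : ℕ), G (x + j) = G x + j := by
    intro x j
    induction j with
    | zero => simp
    | succ j ih =>
      have h1 : x + (j + 1 : ℕ) = (x + j) + 1 := by push_cast; ring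
      rw [h1, hper, ih]; push_cast; ring
  have hGint : ∀ (x : ℝ) (j : ℤ), G (x + j) = G x + j := by
    intro x j
    rcases le_or_gt 0 j with h | h
    · lift j to ℕ using h; exact_mod_cast hGnat x j
    · have h2 := hGnat (x + j) (-j).toNat
      have hcast : (((-j).toNat : ℕ) : ℝ) = -(j:ℝ) := by
        have h4 : (((-j).toNat : ℕ) : ℤ) = -j := Int.toNat_of_nonneg (by omega)
        exact_mod_cast congrArg (fun z : ℤ => (z : ℝ)) h4
      rw [hcast] at h2
      have h3 : x + (j:ℝ) + -(j:ℝ) = x := by ring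
      rw [h3] at h2
      linarith
  have hIint : ∀ (q : ℕ) (x : ℝ) (j : ℤ), G^[q] (x + j) = G^[q] x + j := by
    intro q
    induction q with
    | zero => simp
    | succ q ih =>
      intro x j
      rw [Function.iterate_succ_apply', Function.iterate_succ_apply', ih, hGint]
  set n : ℤ := ⌊G c⌋ with hn
  have hGc : G c = n := by
    have h := Int.fract_add_floor (G c)
    rw [hgc] at h; rw [hn]; linarith
  -- fract of G t for t ∈ [0,1)
  have hfractG : ∀ t : ℝ, 0 ≤ t → t < 1 →
      Int.fract (G t) = G t - n + (if c ≤ t then 0 else 1) := by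
    intro t ht0 ht1
    by_cases hct : c ≤ t
    · rw [if_pos hct]
      rw [Int.fract_eq_iff]
      refine ⟨by have := hmono.le_iff_le.mpr hct; linarith [hGc], ?_, ⟨n, by push_cast; ring⟩⟩
      · have h1 : G t < G (c + 1) := hmono (by linarith [hc.1])
        have h2 : G (c + 1) = n + 1 := by rw [hper, hGc]
        linarith
    · rw [if_neg hct]
      push_neg at hct
      rw [Int.fract_eq_iff]
      constructor
      · have h1 : G (c - 1) < G t := hmono (by linarith [hc.2])
        have h2 : G (c - 1) = n - 1 := by
          have := hper (c - 1); rw [show c - 1 + 1 = c by ring, hGc] at this; linarith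
        linarith
      constructor
      · have h1 : G t < G c := hmono hct
        linarith [hGc]
      · exact ⟨n - 1, by push_cast; ring⟩
  -- main induction: position of the lifted orbit
  have main : ∀ i : ℕ, G^[i] s = Int.fract (G^[i] s) +
      (((n - 1) * i + (((Finset.range i).filter
        (fun j => c ≤ Int.fract (G^[j] s))).card : ℤ) : ℤ) : ℝ) := by
    intro i
    induction i with
    | zero =>
      simp [Int.fract_eq_self.mpr ⟨hs.1, hs.2⟩]
    | succ i ih =>
      set x := Int.fract (G^[i] s) with hx
      set K : ℤ := (n - 1) * i + (((Finset.range i).filter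
        (fun j => c ≤ Int.fract (G^[j] s))).card : ℤ) with hK
      have hx0 : 0 ≤ x := Int.fract_nonneg _
      have hx1 : x < 1 := Int.fract_lt_one _
      have hGi : G^[i] s = x + K := ih
      have hstep : G^[i+1] s = G x + K := by
        rw [Function.iterate_succ_apply', hGi, hGint]
      have hfr : Int.fract (G^[i+1] s) = G x - n + (if c ≤ x then 0 else 1) := by
        rw [hstep, Int.fract_add_intCast, hfractG x hx0 hx1]
      have hcard : (((Finset.range (i+1)).filter
          (fun j => c ≤ Int.fract (G^[j] s))).card : ℤ)
          = (((Finset.range i).filter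
          (fun j => c ≤ Int.fract (G^[j] s))).card : ℤ) + (if c ≤ x then 1 else 0) := by
        rw [Finset.range_add_one, Finset.filter_insert]
        by_cases hcx : c ≤ x
        · rw [if_pos (show c ≤ Int.fract (G^[i] s) by rw [← hx]; exact hcx), if_pos hcx,
            Finset.card_insert_of_notMem (by simp)]
          push_cast; ring
        · rw [if_neg (show ¬ c ≤ Int.fract (G^[i] s) by rw [← hx]; exact hcx), if_neg hcx]
          push_cast; ring
      by_cases hcx : c ≤ x
      · have h2 : (((Finset.range (i+1)).filter
            (fun j => c ≤ Int.fract (G^[j] s))).card : ℤ)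
            = (((Finset.range i).filter
            (fun j => c ≤ Int.fract (G^[j] s))).card : ℤ) + 1 := by
          rw [hcard, if_pos hcx]
        rw [hstep, Int.fract_add_intCast, hfractG x hx0 hx1, if_pos hcx, h2]
        push_cast
        rw [hK]
        push_cast
        ring
      · have h2 : (((Finset.range (i+1)).filter
            (fun j => c ≤ Int.fract (G^[j] s))).card : ℤ)
            = (((Finset.range i).filter
            (fun j => c ≤ Int.fract (G^[j] s))).card : ℤ) := by
          rw [hcard, if_neg hcx]; ring
        rw [hstep, Int.fract_add_intCast, hfractG x hx0 hx1, if_neg hcx, h2]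
        push_cast
        rw [hK]
        push_cast
        ring
  -- compute k
  have hfrp : Int.fract (G^[p] s) = s := by
    rw [hk, Int.fract_add_intCast, Int.fract_eq_self.mpr ⟨hs.1, hs.2⟩]
  have hkval : k = (n - 1) * p + m := by
    have h1 := main p
    rw [hfrp, hk] at h1
    have h2 : (k:ℝ) = ((((n-1) * p + ((((Finset.range p).filter
        (fun j => c ≤ Int.fract (G^[j] s))).card : ℕ) : ℤ)) : ℤ) : ℝ) := by
      push_cast at h1 ⊢
      linarith
    have h3 : k = (n-1) * p + ((((Finset.range p).filter
        (fun j => c ≤ Int.fract (G^[j] s))).card : ℕ) : ℤ) := by exact_mod_cast h2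
    rw [hm]
    exact_mod_cast h3
  -- now the coprimality argument
  set d := Nat.gcd m p with hd
  rcases Nat.eq_zero_or_pos d with hd0 | hdpos
  · exfalso
    have hpz : p = 0 := Nat.eq_zero_of_gcd_eq_zero_right (by rw [← hd]; exact hd0)
    omega
  by_contra hne
  have hd2 : 2 ≤ d := by omega
  obtain ⟨p', hp'⟩ : d ∣ p := Nat.gcd_dvd_right m p
  obtain ⟨m', hm'⟩ : d ∣ m := Nat.gcd_dvd_left m p
  have hdk : (d : ℤ) ∣ k := by
    rw [hkval, hp', hm']; push_cast; exact ⟨(n-1)*p' + m', by ring⟩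
  obtain ⟨k', hk'⟩ := hdk
  have hp'pos : 1 ≤ p' := by
    rcases Nat.eq_zero_or_pos p' with h | h
    · subst h; simp at hp'; omega
    · exact h
  have hp'lt : p' < p := by
    rw [hp']
    have h2 : 2 * p' ≤ d * p' := Nat.mul_le_mul_right _ hd2
    omega
  -- φ := G^[p'] , show φ s = s + k'
  have hiter : ∀ j : ℕ, G^[p' * (j+1)] s = G^[p'] (G^[p' * j] s) := by
    intro j
    rw [← Function.iterate_add_apply]
    congr 1
    ring
  have hmono' : StrictMono (G^[p']) := hmono.iterate p'
  have heq : G^[p'] s = s + k' := by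
    rcases lt_trichotomy (G^[p'] s) (s + k') with h | h | h
    · exfalso
      have grow : ∀ j : ℕ, G^[p' * (j+1)] s < s + (j+1 : ℕ) * k' := by
        intro j
        induction j with
        | zero => simpa using h
        | succ j ih =>
          rw [hiter (j+1)]
          calc G^[p'] (G^[p' * (j+1)] s) < G^[p'] (s + ((j+1 : ℕ) * k' : ℤ)) := by
                apply hmono'
                push_cast
                convert ih using 2
                · rfl
                push_cast; ring
          _ = G^[p'] s + ((j+1 : ℕ) * k' : ℤ) := hIint _ _ _
          _ < s + (j+1+1 : ℕ) * k' := by push_cast; linarith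
      have hfin := grow (d - 1)
      have hpd : p' * (d - 1 + 1) = p := by
        have : d - 1 + 1 = d := by omega
        rw [this, hp']; ring
      rw [hpd, hk] at hfin
      have : (k : ℝ) = (d - 1 + 1 : ℕ) * k' := by
        rw [hk']
        have : (d - 1 + 1 : ℕ) = d := by omega
        rw [this]; push_cast; ring
      linarith
    · exact h
    · exfalso
      have grow : ∀ j : ℕ, s + (j+1 : ℕ) * k' < G^[p' * (j+1)] s := by
        intro j
        induction j with
        | zero => simpa using h
        | succ j ih =>
          rw [hiter (j+1)]
          calc G^[p'] (G^[p' * (j+1)] s) > G^[p'] (s + ((j+1 : ℕ) * k' : ℤ)) := by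
                apply hmono'
                push_cast
                convert ih using 2
                · rfl
                push_cast; ring
          _ = G^[p'] s + ((j+1 : ℕ) * k' : ℤ) := hIint _ _ _
          _ > s + (j+1+1 : ℕ) * k' := by push_cast; linarith
      have hfin := grow (d - 1)
      have hpd : p' * (d - 1 + 1) = p := by
        have : d - 1 + 1 = d := by omega
        rw [this, hp']; ring
      rw [hpd, hk] at hfin
      have : (k : ℝ) = (d - 1 + 1 : ℕ) * k' := by
        rw [hk']
        have : (d - 1 + 1 : ℕ) = d := by omega
        rw [this]; push_cast; ring
      linarith
  have hfr' : Int.fract (G^[p'] s) = Int.fract (G^[0] s) := by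
    rw [heq]
    simp [Int.fract_add_intCast, Int.fract_eq_self.mpr ⟨hs.1, hs.2⟩]
  have := hdistinct p' 0 hp'lt (by omega) hfr'
  omega
end

section
/- Let ξ be a period-p orbit of a degree-1 circle homeomorphism g : S¹ → S¹ with smallest point s ∈ [0,1), and let m be the number of points of ξ lying in [c,1) where c = g^{-1}(0). Let d be the multiplicative inverse of m modulo p. Then s < g^d(s) < g^{2d}(s) < ⋯ < g^{(p-1)d}(s); that is, iterating g by steps of d visits the points of ξ in increasing order. -/
/-- Abstract combinatorial lemma: if `y` is a `p`-periodic sequence of distinct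
(within a period) reals with `y 0` minimal, such that one application of the
dynamics shifts the rank by `m` (encoded by hypothesis `hD`), then stepping by
`d` (the inverse of `m` mod `p`) visits the points in increasing order. -/
lemma orbit_ordering_aux (y : ℕ → ℝ) (c : ℝ) (p m d : ℕ) (hp : 1 ≤ p)
    (hdist : ∀ i j, i < p → j < p → y i = y j → i = j)
    (hmin : ∀ i, i < p → y 0 ≤ y i)
    (hperiod : ∀ i, y (i + p) = y i)
    (hD : ∀ i j, (y (i + 1) < y (j + 1)) ↔
      (((c ≤ y i) ↔ (c ≤ y j)) ∧ y i < y j) ∨ (c ≤ y i ∧ ¬ c ≤ y j))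
    (hm : m = ((Finset.range p).filter (fun i => c ≤ y i)).card)
    (hd : m * d % p = 1) :
    ∀ j k, j < k → k < p → y (j * d) < y (k * d) := by
  classical
  intro j k hjk hkp
  rcases Nat.lt_or_ge p 2 with hp2 | hp2
  · omega
  -- periodicity modulo p
  have hper' : ∀ q r, y (r + q * p) = y r := by
    intro q
    induction q with
    | zero => simp
    | succ n ih =>
      intro r
      have e : r + (n + 1) * p = (r + n * p) + p := by ring
      rw [e, hperiod, ih]
  have hmodp : ∀ i, y (i % p) = y i := by
    intro i
    conv_rhs => rw [← Nat.mod_add_div' i p]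
    exact (hper' (i / p) (i % p)).symm
  have hm1 : 1 ≤ m := by
    rcases Nat.eq_zero_or_pos m with h | h
    · rw [h] at hd; simp at hd
    · exact h
  have hmp : m < p := by
    have hle : m ≤ p := by
      rw [hm]
      calc ((Finset.range p).filter (fun i => c ≤ y i)).card
          ≤ (Finset.range p).card := Finset.card_filter_le _ _
        _ = p := Finset.card_range p
    rcases lt_or_eq_of_le hle with h | h
    · exact h
    · exfalso; rw [h] at hd; rw [Nat.mul_mod_right] at hd; omega
  -- the rank function
  set r : ℕ → ℕ := fun i => ((Finset.range p).filter (fun i' => y i' < y i)).card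
    with hr
  have hrcongr : ∀ i i', y i = y i' → r i = r i' := by
    intro i i' h
    simp only [hr, h]
  have hr_lt : ∀ i j, i < p → j < p → (y i < y j ↔ r i < r j) := by
    have fwd : ∀ i j, i < p → j < p → y i < y j → r i < r j := by
      intro i j hi hj hlt
      apply Finset.card_lt_card
      constructor
      · intro t ht
        simp only [Finset.mem_filter, Finset.mem_range] at ht ⊢
        exact ⟨ht.1, lt_trans ht.2 hlt⟩
      · intro hsub
        have hi' : i ∈ (Finset.range p).filter (fun i' => y i' < y j) := by
          simp only [Finset.mem_filter, Finset.mem_range]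
          exact ⟨hi, hlt⟩
        have := hsub hi'
        simp only [Finset.mem_filter, Finset.mem_range] at this
        exact absurd this.2 (lt_irrefl _)
    intro i j hi hj
    constructor
    · exact fwd i j hi hj
    · intro hlt
      by_contra hne
      push_neg at hne
      rcases lt_or_eq_of_le hne with h | h
      · exact absurd (fwd j i hj hi h) (by omega)
      · have heq := hdist j i hj hi h
        subst heq
        omega
  have hr0 : r 0 = 0 := by
    simp only [hr]
    rw [Finset.filter_false_of_mem, Finset.card_empty]
    intro t ht
    simp only [Finset.mem_range] at ht
    exact not_lt.mpr (hmin t ht)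
  have hrlt : ∀ i, r i < p := by
    intro i
    have h1 : r i = r (i % p) := hrcongr _ _ (hmodp i).symm
    rw [h1]
    have : ((Finset.range p).filter (fun i' => y i' < y (i % p))).card
        < (Finset.range p).card := by
      apply Finset.card_lt_card
      constructor
      · exact Finset.filter_subset _ _
      · intro hsub
        have hmem : i % p ∈ Finset.range p :=
          Finset.mem_range.mpr (Nat.mod_lt _ (by omega))
        have := hsub hmem
        simp only [Finset.mem_filter] at this
        exact absurd this.2 (lt_irrefl _)
    simpa [Finset.card_range] using this
  have hpm : ((Finset.range p).filter (fun i' => ¬ c ≤ y i')).card = p - m := by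
    have := Finset.card_filter_add_card_filter_not
      (s := Finset.range p) (fun i' => c ≤ y i')
    rw [Finset.card_range] at this
    omega
  -- the key step: applying the dynamics shifts the rank by m mod p
  have hshift : ∀ t, t < p → y ((t + 1) % p) = y (t + 1) := by
    intro t ht
    rcases lt_or_eq_of_le (Nat.succ_le_of_lt ht) with h | h
    · rw [Nat.mod_eq_of_lt h]
    · have h' : t + 1 = p := h
      have hp0 : y p = y 0 := by simpa using hperiod 0
      rw [h', Nat.mod_self, hp0]
  have hre : ∀ i, r (i + 1)
      = ((Finset.range p).filter (fun t => y (t + 1) < y (i + 1))).card := by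
    intro i
    simp only [hr]
    apply Finset.card_nbij' (fun t => (t + (p - 1)) % p) (fun t => (t + 1) % p)
    · intro a ha
      simp only [Finset.mem_coe, Finset.mem_filter, Finset.mem_range] at ha ⊢
      have hlt : (a + (p - 1)) % p < p := Nat.mod_lt _ (by omega)
      refine ⟨hlt, ?_⟩
      have : ((a + (p - 1)) % p + 1) % p = a := by
        rw [Nat.mod_add_mod]
        have e : a + (p - 1) + 1 = a + p := by omega
        rw [e, Nat.add_mod_right, Nat.mod_eq_of_lt ha.1]
      rw [← hshift _ hlt, this]
      exact ha.2
    · intro a ha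
      simp only [Finset.mem_coe, Finset.mem_filter, Finset.mem_range] at ha ⊢
      refine ⟨Nat.mod_lt _ (by omega), ?_⟩
      rw [hshift _ ha.1]
      exact ha.2
    · intro a ha
      simp only [Finset.mem_coe, Finset.mem_filter, Finset.mem_range] at ha
      beta_reduce
      rw [Nat.mod_add_mod]
      have e : a + (p - 1) + 1 = a + p := by omega
      rw [e, Nat.add_mod_right, Nat.mod_eq_of_lt ha.1]
    · intro a ha
      simp only [Finset.mem_coe, Finset.mem_filter, Finset.mem_range] at ha
      beta_reduce
      rw [Nat.mod_add_mod]
      have e : a + 1 + (p - 1) = a + p := by omega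
      rw [e, Nat.add_mod_right, Nat.mod_eq_of_lt ha.1]
  have hkey : ∀ i, r (i + 1) = (r i + m) % p := by
    intro i
    by_cases hci : c ≤ y i
    · -- the point is above c : rank decreases by p - m
      have h1 : r (i + 1)
          = ((Finset.range p).filter (fun t => c ≤ y t ∧ y t < y i)).card := by
        rw [hre i]
        congr 1
        apply Finset.filter_congr
        intro t _
        rw [hD t i]
        constructor
        · rintro (⟨h1, h2⟩ | ⟨h1, h2⟩)
          · exact ⟨h1.mpr hci, h2⟩
          · exact absurd hci h2
        · rintro ⟨h1, h2⟩
          exact Or.inl ⟨⟨fun _ => hci, fun _ => h1⟩, h2⟩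
      have hsplit : (((Finset.range p).filter (fun t => y t < y i)).filter
            (fun t => c ≤ y t)).card
          + (((Finset.range p).filter (fun t => y t < y i)).filter
            (fun t => ¬ c ≤ y t)).card = r i :=
        Finset.card_filter_add_card_filter_not _
      have he1 : ((Finset.range p).filter (fun t => y t < y i)).filter
            (fun t => c ≤ y t)
          = (Finset.range p).filter (fun t => c ≤ y t ∧ y t < y i) := by
        rw [Finset.filter_filter]
        apply Finset.filter_congr
        intro t _
        tauto
      have he2 : ((Finset.range p).filter (fun t => y t < y i)).filter
            (fun t => ¬ c ≤ y t)
          = (Finset.range p).filter (fun t => ¬ c ≤ y t) := by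
        rw [Finset.filter_filter]
        apply Finset.filter_congr
        intro t _
        constructor
        · tauto
        · intro h
          exact ⟨lt_of_lt_of_le (not_le.mp h) hci, h⟩
      rw [he1, he2, hpm] at hsplit
      have hrib : r i < p := hrlt i
      have : r (i + 1) + (p - m) = r i := by rw [h1]; omega
      have hge : p ≤ r i + m := by omega
      rw [Nat.mod_eq_sub_mod hge, Nat.mod_eq_of_lt (by omega)]
      omega
    · -- the point is below c : rank increases by m
      have h1 : r (i + 1)
          = ((Finset.range p).filter
              (fun t => (¬ c ≤ y t ∧ y t < y i) ∨ c ≤ y t)).card := by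
        rw [hre i]
        congr 1
        apply Finset.filter_congr
        intro t _
        rw [hD t i]
        constructor
        · rintro (⟨h1, h2⟩ | ⟨h1, h2⟩)
          · exact Or.inl ⟨fun h => hci (h1.mp h), h2⟩
          · exact Or.inr h1
        · rintro (⟨h1, h2⟩ | h1)
          · exact Or.inl ⟨⟨fun h => absurd h h1, fun h => absurd h hci⟩, h2⟩
          · exact Or.inr ⟨h1, hci⟩
      have hdisj : Disjoint
          ((Finset.range p).filter (fun t => ¬ c ≤ y t ∧ y t < y i))
          ((Finset.range p).filter (fun t => c ≤ y t)) := by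
        rw [Finset.disjoint_left]
        intro t ht1 ht2
        simp only [Finset.mem_filter] at ht1 ht2
        exact ht1.2.1 ht2.2
      have hunion : (Finset.range p).filter
            (fun t => (¬ c ≤ y t ∧ y t < y i) ∨ c ≤ y t)
          = ((Finset.range p).filter (fun t => ¬ c ≤ y t ∧ y t < y i))
            ∪ ((Finset.range p).filter (fun t => c ≤ y t)) :=
        Finset.filter_or _ _ _
      have he3 : (Finset.range p).filter (fun t => ¬ c ≤ y t ∧ y t < y i)
          = (Finset.range p).filter (fun t => y t < y i) := by
        apply Finset.filter_congr
        intro t _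
        constructor
        · tauto
        · intro h
          exact ⟨not_le.mpr (lt_trans h (not_le.mp hci)), h⟩
      have h2 : r (i + 1) = r i + m := by
        rw [h1, hunion, Finset.card_union_of_disjoint hdisj, he3, ← hm]
      -- r i < p - m since all points below y i are below c, but y (i % p) is
      -- below c and not below y i
      have hri : r i < p - m := by
        have hsub : (Finset.range p).filter (fun t => y t < y i)
            ⊂ (Finset.range p).filter (fun t => ¬ c ≤ y t) := by
          constructor
          · intro t ht
            simp only [Finset.mem_filter] at ht ⊢
            exact ⟨ht.1, not_le.mpr (lt_trans ht.2 (not_le.mp hci))⟩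
          · intro hsub
            have hmem : i % p ∈ (Finset.range p).filter (fun t => ¬ c ≤ y t) := by
              simp only [Finset.mem_filter, Finset.mem_range]
              exact ⟨Nat.mod_lt _ (by omega), by rw [hmodp]; exact hci⟩
            have := hsub hmem
            simp only [Finset.mem_filter] at this
            rw [hmodp] at this
            exact absurd this.2 (lt_irrefl _)
        have := Finset.card_lt_card hsub
        rw [hpm] at this
        exact this
      rw [h2, Nat.mod_eq_of_lt (by omega)]
  -- iterating: r i = (i * m) % p
  have hriter : ∀ i, r i = (i * m) % p := by
    intro i
    induction i with
    | zero => simpa using hr0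
    | succ n ih =>
      rw [hkey n, ih, Nat.mod_add_mod, Nat.succ_mul]
  have hjd : ∀ j, j < p → r (j * d) = j := by
    intro j hj
    rw [hriter]
    have e : j * d * m = j * (m * d) := by ring
    rw [e, Nat.mul_mod, hd, Nat.mod_eq_of_lt hj, mul_one, Nat.mod_eq_of_lt hj]
  -- conclude
  have h1 : y (j * d) = y (j * d % p) := (hmodp _).symm
  have h2 : y (k * d) = y (k * d % p) := (hmodp _).symm
  rw [h1, h2]
  apply (hr_lt _ _ (Nat.mod_lt _ (by omega)) (Nat.mod_lt _ (by omega))).mpr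
  have e1 : r (j * d % p) = r (j * d) := hrcongr _ _ (hmodp _)
  have e2 : r (k * d % p) = r (k * d) := hrcongr _ _ (hmodp _)
  rw [e1, e2, hjd j (lt_trans hjk hkp), hjd k hkp]
  exact hjk

/-- Let `g` be a degree-1 circle homeomorphism, represented by a lift
`G : ℝ → ℝ` (an increasing homeomorphism with `G(w+1) = G(w)+1`); circle points
are represented by their fractional parts in `[0,1)`.  Let `ξ` be a period-`p`
orbit with smallest point `s`, let `c = g⁻¹(0)`, let `m` be the number of
points of `ξ` in `[c,1)`, and let `d` be the multiplicative inverse of `m`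
mod `p`.  Then `s < g^d(s) < g^{2d}(s) < ⋯ < g^{(p-1)d}(s)`. -/
theorem orbit_ordering
    (G : ℝ → ℝ) (hmono : StrictMono G) (hsurj : Function.Surjective G)
    (hper : ∀ x : ℝ, G (x + 1) = G x + 1)
    (p : ℕ) (hp : 1 ≤ p)
    (s : ℝ) (hs : s ∈ Set.Ico (0 : ℝ) 1)
    (hsmallest : ∀ i, i < p → s ≤ Int.fract (G^[i] s))
    (hdistinct : ∀ i j, i < p → j < p →
      Int.fract (G^[i] s) = Int.fract (G^[j] s) → i = j)
    (hperiodic : ∃ k : ℤ, G^[p] s = s + k)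
    (c : ℝ) (hc : c ∈ Set.Ico (0 : ℝ) 1) (hgc : Int.fract (G c) = 0)
    (m : ℕ)
    (hm : m = ((Finset.range p).filter (fun i => c ≤ Int.fract (G^[i] s))).card)
    (d : ℕ) (hd1 : 1 ≤ d) (hdp : d ≤ p - 1) (hd : m * d % p = 1) :
    ∀ j k, j < k → k < p → Int.fract (G^[j * d] s) < Int.fract (G^[k * d] s) := by
  classical
  -- G commutes with integer translations
  have hZ : ∀ (x : ℝ) (k : ℤ), G (x + k) = G x + k := by
    intro x k
    induction k using Int.induction_on with
    | zero => simp
    | succ n ih =>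
      have e : x + ((n : ℤ) + 1 : ℤ) = (x + (n : ℤ)) + 1 := by push_cast; ring
      rw [e, hper, ih]
      push_cast; ring
    | pred n ih =>
      have e : x + ((-(n : ℤ) - 1 : ℤ) : ℝ) + 1 = x + ((-(n : ℤ) : ℤ) : ℝ) := by
        push_cast; ring
      have h1 := hper (x + ((-(n : ℤ) - 1 : ℤ) : ℝ))
      rw [e, ih] at h1
      push_cast at h1 ⊢
      linarith
  have hiterZ : ∀ (i : ℕ) (x : ℝ) (k : ℤ), G^[i] (x + k) = G^[i] x + k := by
    intro i
    induction i with
    | zero => simp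
    | succ n ih =>
      intro x k
      rw [Function.iterate_succ_apply', Function.iterate_succ_apply', ih, hZ]
  have hfractG : ∀ x : ℝ, Int.fract (G (Int.fract x)) = Int.fract (G x) := by
    intro x
    have e : Int.fract x = x + (-⌊x⌋ : ℤ) := by
      rw [Int.fract]; push_cast; ring
    rw [e, hZ]
    push_cast
    rw [← sub_eq_add_neg, Int.fract_sub_intCast]
  -- basic facts about c and the floor of G c
  set n : ℤ := ⌊G c⌋ with hn
  have hGc : G c = n := by
    have := Int.fract_add_floor (G c)
    rw [hgc] at this
    simpa [hn] using this.symm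
  have hG1 : G 1 = G 0 + 1 := by simpa using hper 0
  have hG0n : G 0 ≤ n := by rw [← hGc]; exact hmono.monotone hc.1
  have hGcm1 : G (c - 1) = (n : ℝ) - 1 := by
    have := hper (c - 1)
    simp only [sub_add_cancel] at this
    rw [hGc] at this
    linarith
  -- formula for the fractional part of G a for a in [0,1)
  have hfr : ∀ a, a ∈ Set.Ico (0 : ℝ) 1 →
      Int.fract (G a) = if c ≤ a then G a - n else G a - n + 1 := by
    intro a ha
    by_cases hca : c ≤ a
    · rw [if_pos hca]
      have h1 : (n : ℝ) ≤ G a := by rw [← hGc]; exact hmono.monotone hca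
      have h2 : G a < (n : ℝ) + 1 := by
        have := hmono ha.2
        rw [hG1] at this
        linarith
      rw [show G a - (n : ℝ) = G a - (n : ℤ) by push_cast; ring,
        ← Int.fract_sub_intCast (G a) n]
      rw [Int.fract_eq_self.mpr ⟨by linarith, by linarith⟩]
    · rw [if_neg hca]
      push_neg at hca
      have h1 : G a < (n : ℝ) := by rw [← hGc]; exact hmono hca
      have h2 : (n : ℝ) - 1 < G a := by
        have : c - 1 < a := by linarith [hc.2, ha.1]
        have := hmono this
        rw [hGcm1] at this
        linarith
      rw [show Int.fract (G a) = Int.fract (G a - (n - 1 : ℤ)) by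
        rw [Int.fract_sub_intCast]]
      rw [Int.fract_eq_self.mpr ⟨by push_cast; linarith, by push_cast; linarith⟩]
      push_cast; ring
  -- comparison of images
  have hcomp : ∀ a b, a ∈ Set.Ico (0 : ℝ) 1 → b ∈ Set.Ico (0 : ℝ) 1 →
      (Int.fract (G a) < Int.fract (G b) ↔
        (((c ≤ a) ↔ (c ≤ b)) ∧ a < b) ∨ (c ≤ a ∧ ¬ c ≤ b)) := by
    intro a b ha hb
    rw [hfr a ha, hfr b hb]
    by_cases hca : c ≤ a <;> by_cases hcb : c ≤ b
    · rw [if_pos hca, if_pos hcb]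
      constructor
      · intro h
        exact Or.inl ⟨⟨fun _ => hcb, fun _ => hca⟩, hmono.lt_iff_lt.mp (by linarith)⟩
      · rintro (⟨_, h⟩ | ⟨_, h⟩)
        · have := hmono h; linarith
        · exact absurd hcb h
    · rw [if_pos hca, if_neg hcb]
      constructor
      · intro _; exact Or.inr ⟨hca, hcb⟩
      · intro _
        -- G a < G b + 1 since a < 1 ≤ b + 1
        have h1 : a < b + 1 := by linarith [ha.2, hb.1]
        have h2 : G a < G (b + 1) := hmono h1
        rw [hper] at h2
        linarith
    · rw [if_neg hca, if_pos hcb]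
      constructor
      · intro h
        exfalso
        have h1 : b < a + 1 := by linarith [hb.2, ha.1]
        have h2 : G b < G (a + 1) := hmono h1
        rw [hper] at h2
        linarith
      · rintro (⟨h1, _⟩ | ⟨h1, _⟩)
        · exact absurd (h1.mpr hcb) hca
        · exact absurd h1 hca
    · rw [if_neg hca, if_neg hcb]
      constructor
      · intro h
        exact Or.inl ⟨⟨fun h' => absurd h' hca, fun h' => absurd h' hcb⟩,
          hmono.lt_iff_lt.mp (by linarith)⟩
      · rintro (⟨_, h⟩ | ⟨h, _⟩)
        · have := hmono h; linarith
        · exact absurd h hca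
  -- apply the abstract lemma
  apply orbit_ordering_aux (fun i => Int.fract (G^[i] s)) c p m d hp
  · exact hdistinct
  · intro i hi
    simpa [Int.fract_eq_self.mpr ⟨hs.1, hs.2⟩] using hsmallest i hi
  · intro i
    obtain ⟨k, hk⟩ := hperiodic
    show Int.fract (G^[i + p] s) = Int.fract (G^[i] s)
    rw [Function.iterate_add_apply, hk, hiterZ, Int.fract_add_intCast]
  · intro i j
    show Int.fract (G^[i + 1] s) < Int.fract (G^[j + 1] s) ↔ _
    have hstep : ∀ t : ℕ, Int.fract (G^[t + 1] s)
        = Int.fract (G (Int.fract (G^[t] s))) := by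
      intro t
      rw [Function.iterate_succ_apply', hfractG]
    rw [hstep i, hstep j]
    exact hcomp _ _ ⟨Int.fract_nonneg _, Int.fract_lt_one _⟩
      ⟨Int.fract_nonneg _, Int.fract_lt_one _⟩
  · exact hm
  · exact hd
end

section
/- Let g : S¹ → S¹ be a degree-1 circle homeomorphism, c = g^{-1}(0), and let ξ be a period-p orbit of g with s its smallest point in [0,1). Suppose exactly ℓ points of ξ lie in the arc (0,1/2) and m points lie in [c,1), and let d be the multiplicative inverse of m mod p. Define the word X ∈ {L,R}^p by X_i = L if g^i(s) ∈ (0,1/2) and X_i = R if g^i(s) ∈ (1/2,1) (assuming no point of ξ equals 0 or 1/2). Then X = F[ℓ,m,p], i.e., X_i = L if and only if (i·m mod p) < ℓ. -/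
/-- Let `g` be a degree-1 circle homeomorphism, represented by a lift
`G : ℝ → ℝ` (an increasing homeomorphism with `G(w+1) = G(w)+1`); circle points
are represented by their fractional parts in `[0,1)`.  Let `ξ` be a period-`p`
orbit with smallest point `s`, no point of which equals `0` or `1/2`.  Let `ℓ`
be the number of points of `ξ` in `(0,1/2)`, let `c = g⁻¹(0)`, and let `m` be
the number of points of `ξ` in `[c,1)`.  Then the symbolic itinerary of `ξ`
(symbol `L` at `i` iff `g^i(s) ∈ (0,1/2)`) is the rotational word `F[ℓ,m,p]`:
`g^i(s) ∈ (0,1/2)` iff `i·m mod p < ℓ`. -/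
theorem itinerary_is_rotational
    (G : ℝ → ℝ) (hmono : StrictMono G) (hsurj : Function.Surjective G)
    (hper : ∀ x : ℝ, G (x + 1) = G x + 1)
    (p : ℕ) (hp : 1 ≤ p)
    (s : ℝ) (hs : s ∈ Set.Ico (0 : ℝ) 1)
    (hsmallest : ∀ i, i < p → s ≤ Int.fract (G^[i] s))
    (hdistinct : ∀ i j, i < p → j < p →
      Int.fract (G^[i] s) = Int.fract (G^[j] s) → i = j)
    (hperiodic : ∃ k : ℤ, G^[p] s = s + k)
    (hoff : ∀ i, i < p → Int.fract (G^[i] s) ≠ 0 ∧ Int.fract (G^[i] s) ≠ 1 / 2)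
    (c : ℝ) (hc : c ∈ Set.Ico (0 : ℝ) 1) (hgc : Int.fract (G c) = 0)
    (m : ℕ)
    (hm : m = ((Finset.range p).filter (fun i => c ≤ Int.fract (G^[i] s))).card)
    (ℓ : ℕ)
    (hℓ : ℓ = ((Finset.range p).filter
      (fun i => 0 < Int.fract (G^[i] s) ∧ Int.fract (G^[i] s) < 1 / 2)).card) :
    ∀ i, i < p →
      ((0 < Int.fract (G^[i] s) ∧ Int.fract (G^[i] s) < 1 / 2) ↔ i * m % p < ℓ) := by
  have hp0 : 0 < p := hp
  obtain ⟨x, hxdef⟩ : ∃ x : ℕ → ℝ, ∀ j, Int.fract (G^[j] s) = x j := ⟨_, fun _ => rfl⟩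
  simp only [hxdef] at hm hℓ hsmallest hoff ⊢
  have hs0 : (0:ℝ) ≤ s := hs.1
  have hs1 : s < 1 := hs.2
  have hc0 : (0:ℝ) ≤ c := hc.1
  have hc1 : c < 1 := hc.2
  have xmem0 : ∀ j, (0:ℝ) ≤ x j := fun j => hxdef j ▸ Int.fract_nonneg _
  have xmem1 : ∀ j, x j < 1 := fun j => hxdef j ▸ Int.fract_lt_one _
  -- translation by integers
  have hperZ : ∀ (n : ℤ) (w : ℝ), G (w + n) = G w + n := by
    intro n
    induction n using Int.induction_on with
    | zero => simp
    | succ n ih =>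
      intro w
      have h1 : (w + ((n : ℤ) + 1 : ℤ) : ℝ) = (w + (n : ℤ)) + 1 := by push_cast; ring
      rw [h1, hper, ih]; push_cast; ring
    | pred n ih =>
      intro w
      have h1 : (w + (-(n : ℤ) - 1 : ℤ) : ℝ) + 1 = w + (-(n : ℤ) : ℤ) := by push_cast; ring
      have h2 := hper (w + (-(n : ℤ) - 1 : ℤ))
      rw [h1, ih] at h2
      push_cast at h2 ⊢
      linarith
  have fract_G : ∀ w : ℝ, Int.fract (G w) = Int.fract (G (Int.fract w)) := by
    intro w
    have h1 : G w = G (Int.fract w + (⌊w⌋ : ℤ)) := by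
      congr 1
      rw [Int.fract]; ring
    rw [h1, hperZ, Int.fract_add_intCast]
  have step : ∀ j, x (j + 1) = Int.fract (G (x j)) := by
    intro j
    rw [← hxdef, ← hxdef, Function.iterate_succ_apply', fract_G]
  have x0 : x 0 = s := by
    rw [← hxdef]; simpa using Int.fract_eq_self.mpr ⟨hs0, hs1⟩
  have xp : x p = x 0 := by
    obtain ⟨k, hk⟩ := hperiodic
    rw [← hxdef, ← hxdef, hk]
    simp [Int.fract_add_intCast, Int.fract_eq_self.mpr ⟨hs0, hs1⟩]
  set e : ℤ := ⌊G c⌋ with he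
  have hGc : G c = (e : ℝ) := by
    have h2 := hgc
    rw [Int.fract] at h2
    have : G c - (e : ℝ) = 0 := h2
    linarith
  have hG1 : G 1 = G 0 + 1 := by simpa using hper 0
  have regA : ∀ u : ℝ, c ≤ u → u < 1 → Int.fract (G u) = G u - e := by
    intro u h1 h2
    have l1 : (e : ℝ) ≤ G u := by rw [← hGc]; exact hmono.monotone h1
    have l2 : G u < (e : ℝ) + 1 := by
      have h3 : G u < G 1 := hmono h2
      have h4 : G 0 ≤ G c := hmono.monotone hc0
      rw [hG1] at h3; rw [hGc] at h4; linarith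
    have hfl : ⌊G u⌋ = e := by rw [Int.floor_eq_iff]; exact ⟨l1, l2⟩
    rw [Int.fract, hfl]
  have regB : ∀ u : ℝ, 0 ≤ u → u < c → Int.fract (G u) = G u - e + 1 := by
    intro u h1 h2
    have l1 : ((e - 1 : ℤ) : ℝ) ≤ G u := by
      have h3 : G c < G 1 := hmono hc1
      have h4 : G 0 ≤ G u := hmono.monotone h1
      rw [hG1, hGc] at h3
      push_cast; linarith
    have l2 : G u < ((e - 1 : ℤ) : ℝ) + 1 := by
      have h3 : G u < G c := hmono h2
      rw [hGc] at h3; push_cast; linarith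
    have hfl : ⌊G u⌋ = e - 1 := by rw [Int.floor_eq_iff]; exact ⟨l1, l2⟩
    rw [Int.fract, hfl]; push_cast; ring
  have cmp : ∀ u v : ℝ, 0 ≤ u → u < 1 → 0 ≤ v → v < 1 →
      (Int.fract (G u) < Int.fract (G v) ↔
        ((c ≤ u ∧ c ≤ v ∧ u < v) ∨ (u < c ∧ v < c ∧ u < v) ∨ (c ≤ u ∧ v < c))) := by
    intro u v hu0 hu1 hv0 hv1
    rcases le_or_gt c u with hcu | hcu <;> rcases le_or_gt c v with hcv | hcv
    · rw [regA u hcu hu1, regA v hcv hv1]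
      constructor
      · intro h
        exact Or.inl ⟨hcu, hcv, hmono.lt_iff_lt.mp (by linarith)⟩
      · rintro (⟨-, -, h⟩ | ⟨h, -, -⟩ | ⟨-, h⟩)
        · have := hmono h; linarith
        · exact absurd h (not_lt.mpr hcu)
        · exact absurd h (not_lt.mpr hcv)
    · have htrue : Int.fract (G u) < Int.fract (G v) := by
        rw [regA u hcu hu1, regB v hv0 hcv]
        have h3 : G u < G 1 := hmono hu1
        have h4 : G 0 ≤ G v := hmono.monotone hv0
        rw [hG1] at h3; linarith
      exact iff_of_true htrue (Or.inr (Or.inr ⟨hcu, hcv⟩))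
    · have hfalse : ¬ Int.fract (G u) < Int.fract (G v) := by
        rw [regB u hu0 hcu, regA v hcv hv1]
        have h3 : G v < G 1 := hmono hv1
        have h4 : G 0 ≤ G u := hmono.monotone hu0
        rw [hG1] at h3
        linarith
      apply iff_of_false hfalse
      rintro (⟨h, -, -⟩ | ⟨-, h, -⟩ | ⟨-, h⟩)
      · exact absurd h (not_le.mpr hcu)
      · exact absurd h (not_lt.mpr hcv)
      · exact absurd h (not_lt.mpr hcv)
    · rw [regB u hu0 hcu, regB v hv0 hcv]
      constructor
      · intro h
        exact Or.inr (Or.inl ⟨hcu, hcv, hmono.lt_iff_lt.mp (by linarith)⟩)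
      · rintro (⟨h, -, -⟩ | ⟨-, -, h⟩ | ⟨h, -⟩)
        · exact absurd h (not_le.mpr hcu)
        · have := hmono h; linarith
        · exact absurd h (not_le.mpr hcu)
  classical
  set r : ℕ → ℕ := fun i => ((Finset.range p).filter (fun j => x j < x i)).card with hr
  have hr_lt : ∀ i, i < p → r i < p := by
    intro i hi
    have hss : (Finset.range p).filter (fun j => x j < x i) ⊂ Finset.range p := by
      rw [Finset.ssubset_iff_of_subset (Finset.filter_subset _ _)]
      exact ⟨i, Finset.mem_range.mpr hi, by simp⟩
    simpa using Finset.card_lt_card hss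
  have key1 : ∀ a, a < p → ((a + 1) % p + (p - 1)) % p = a := by
    intro a ha
    rw [Nat.mod_add_mod, show a + 1 + (p - 1) = a + p by omega, Nat.add_mod_right,
      Nat.mod_eq_of_lt ha]
  have key2 : ∀ a, a < p → ((a + (p - 1)) % p + 1) % p = a := by
    intro a ha
    rw [Nat.mod_add_mod, show a + (p - 1) + 1 = a + p by omega, Nat.add_mod_right,
      Nat.mod_eq_of_lt ha]
  have hshift : ∀ (P : ℕ → Prop) (_ : DecidablePred P),
      ((Finset.range p).filter (fun j => P ((j + 1) % p))).card =
        ((Finset.range p).filter P).card := by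
    intro P _
    apply Finset.card_nbij' (fun j => (j + 1) % p) (fun j => (j + (p - 1)) % p)
    · intro a ha
      simp only [Finset.mem_coe, Finset.mem_filter, Finset.mem_range] at ha ⊢
      exact ⟨Nat.mod_lt _ hp0, ha.2⟩
    · intro a ha
      simp only [Finset.mem_coe, Finset.mem_filter, Finset.mem_range] at ha ⊢
      refine ⟨Nat.mod_lt _ hp0, ?_⟩
      rw [key2 a ha.1]
      exact ha.2
    · intro a ha
      simp only [Finset.mem_coe, Finset.mem_filter, Finset.mem_range] at ha
      exact key1 a ha.1
    · intro a ha
      simp only [Finset.mem_coe, Finset.mem_filter, Finset.mem_range] at ha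
      exact key2 a ha.1
  have hm_le : m ≤ p := by
    rw [hm]
    exact le_trans (Finset.card_filter_le _ _) (le_of_eq (Finset.card_range p))
  have hnotc : ((Finset.range p).filter (fun j => ¬ c ≤ x j)).card = p - m := by
    have h2 := Finset.card_filter_add_card_filter_not (s := Finset.range p)
      (p := fun j => c ≤ x j)
    rw [Finset.card_range, ← hm] at h2
    omega
  have key_card : ∀ i, r (i + 1) =
      ((Finset.range p).filter
        (fun j => Int.fract (G (x j)) < Int.fract (G (x i)))).card := by
    intro i
    have h1 : r (i + 1) = ((Finset.range p).filter
        (fun j => x ((j + 1) % p) < x (i + 1))).card := by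
      rw [hr]
      exact (hshift (fun j => x j < x (i + 1)) inferInstance).symm
    rw [h1]
    have h2 : ∀ j ∈ Finset.range p,
        (x ((j + 1) % p) < x (i + 1)) ↔
          (Int.fract (G (x j)) < Int.fract (G (x i))) := by
      intro j hj
      rw [Finset.mem_range] at hj
      have hx1 : x ((j + 1) % p) = Int.fract (G (x j)) := by
        rcases eq_or_lt_of_le (Nat.succ_le_of_lt hj) with h | h
        · rw [show (j + 1) % p = 0 by rw [show j + 1 = p from h]; exact Nat.mod_self p, ← xp, ← h]
          exact step j
        · rw [Nat.mod_eq_of_lt h]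
          exact step j
      rw [hx1, step i]
    rw [Finset.filter_congr h2]
  have hrecA : ∀ i, ¬ c ≤ x i → r (i + 1) = m + r i := by
    intro i hci
    rw [key_card i]
    have h2 : ∀ j ∈ Finset.range p,
        (Int.fract (G (x j)) < Int.fract (G (x i))) ↔ (c ≤ x j ∨ x j < x i) := by
      intro j _
      rw [cmp (x j) (x i) (xmem0 j) (xmem1 j) (xmem0 i) (xmem1 i)]
      constructor
      · rintro (⟨-, h, -⟩ | ⟨-, -, h⟩ | ⟨h, -⟩)
        · exact absurd h hci
        · exact Or.inr h
        · exact Or.inl h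
      · rintro (h | h)
        · exact Or.inr (Or.inr ⟨h, not_le.mp hci⟩)
        · rcases le_or_gt c (x j) with h' | h'
          · exact Or.inr (Or.inr ⟨h', not_le.mp hci⟩)
          · exact Or.inr (Or.inl ⟨h', not_le.mp hci, h⟩)
    rw [Finset.filter_congr h2, Finset.filter_or, Finset.card_union_of_disjoint, ← hm]
    rw [Finset.disjoint_filter]
    intro j _ hcj hlt
    exact absurd hcj (not_le.mpr (lt_trans hlt (not_le.mp hci)))
  have hrecB : ∀ i, c ≤ x i → r (i + 1) + (p - m) = r i := by
    intro i hci
    rw [key_card i]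
    have h2 : ∀ j ∈ Finset.range p,
        (Int.fract (G (x j)) < Int.fract (G (x i))) ↔ (c ≤ x j ∧ x j < x i) := by
      intro j _
      rw [cmp (x j) (x i) (xmem0 j) (xmem1 j) (xmem0 i) (xmem1 i)]
      constructor
      · rintro (⟨h1, -, h3⟩ | ⟨-, h2', -⟩ | ⟨-, h3⟩)
        · exact ⟨h1, h3⟩
        · exact absurd hci (not_le.mpr h2')
        · exact absurd hci (not_le.mpr h3)
      · rintro ⟨h1', h2'⟩
        exact Or.inl ⟨h1', hci, h2'⟩
    rw [Finset.filter_congr h2]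
    have h3 : (Finset.range p).filter (fun j => x j < x i) =
        ((Finset.range p).filter (fun j => c ≤ x j ∧ x j < x i)) ∪
        ((Finset.range p).filter (fun j => ¬ c ≤ x j)) := by
      ext j
      simp only [Finset.mem_union, Finset.mem_filter, Finset.mem_range]
      constructor
      · rintro ⟨hj, hlt⟩
        rcases le_or_gt c (x j) with h | h
        · exact Or.inl ⟨hj, h, hlt⟩
        · exact Or.inr ⟨hj, not_le.mpr h⟩
      · rintro (⟨hj, -, hlt⟩ | ⟨hj, h⟩)
        · exact ⟨hj, hlt⟩
        · exact ⟨hj, lt_of_lt_of_le (not_le.mp h) hci⟩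
    have h4 : r i = ((Finset.range p).filter (fun j => c ≤ x j ∧ x j < x i)).card +
        ((Finset.range p).filter (fun j => ¬ c ≤ x j)).card := by
      simp only [hr]
      rw [h3, Finset.card_union_of_disjoint]
      rw [Finset.disjoint_filter]
      rintro j _ ⟨hcj, -⟩ hncj
      exact hncj hcj
    rw [hnotc] at h4
    omega
  have hmain : ∀ i, i < p → r i = i * m % p := by
    intro i
    induction i with
    | zero =>
      intro _
      have hempty : (Finset.range p).filter (fun j => x j < x 0) = ∅ := by
        rw [Finset.filter_eq_empty_iff]
        intro j hj
        rw [x0]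
        exact not_lt.mpr (hsmallest j (Finset.mem_range.mp hj))
      simp [hr, hempty]
    | succ i ih =>
      intro h
      have hi : i < p := Nat.lt_of_succ_lt h
      have hri := ih hi
      have hlt := hr_lt (i + 1) h
      have hmod : (i + 1) * m % p = (r i + m) % p := by
        rw [add_mul, one_mul, ← Nat.mod_add_mod, ← hri]
      by_cases hci : c ≤ x i
      · have h2 := hrecB i hci
        have h3 : r i + m = r (i + 1) + p := by omega
        rw [hmod, h3, Nat.add_mod_right, Nat.mod_eq_of_lt hlt]
      · have h2 := hrecA i hci
        rw [hmod, show r i + m = r (i + 1) by omega, Nat.mod_eq_of_lt hlt]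
  intro i hi
  have hx0 : 0 < x i := lt_of_le_of_ne (xmem0 i) (Ne.symm (hoff i hi).1)
  rw [← hmain i hi]
  constructor
  · rintro ⟨-, hlt2⟩
    rw [hℓ]
    simp only [hr]
    apply Finset.card_lt_card
    rw [Finset.ssubset_iff_of_subset]
    · exact ⟨i, Finset.mem_filter.mpr ⟨Finset.mem_range.mpr hi, hx0, hlt2⟩, by simp⟩
    · intro j hj
      rw [Finset.mem_filter] at hj ⊢
      refine ⟨hj.1, ?_, lt_trans hj.2 hlt2⟩
      exact lt_of_le_of_ne (xmem0 j) (Ne.symm (hoff j (Finset.mem_range.mp hj.1)).1)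
  · intro hrl
    refine ⟨hx0, ?_⟩
    by_contra h'
    have hgt : 1 / 2 < x i := lt_of_le_of_ne (not_lt.mp h') (Ne.symm (hoff i hi).2)
    have hsub : (Finset.range p).filter (fun j => 0 < x j ∧ x j < 1 / 2) ⊆
        (Finset.range p).filter (fun j => x j < x i) := by
      intro j hj
      rw [Finset.mem_filter] at hj ⊢
      exact ⟨hj.1, lt_trans hj.2.2 hgt⟩
    have hle : ℓ ≤ r i := by
      rw [hℓ]
      simp only [hr]
      exact Finset.card_le_card hsub
    omega
end
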